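/- There is an absolute constant C such that for every integer c ≥ 0 there exists a DFA over the alphabet {0,1}×{0,1} with at most C·(log₂(c+1)+1) states that accepts a word w if and only if, writing x for the word of first components of w and y for the word of second components, both x and y are valid Fibonacci representations and [x] − c = [y] (equivalently [x] = [y] + c). -/

import Mathlib

/-!
After a prefix `p` of `x × y` has been read, an automaton only needs `D = [x_p] - [y_p]`, the
analogous difference `E` computed with every weight shifted down by one index, and the last letter.
Appending a suffix `v` of length `m` gives `[x] - [y] = F_{m+1} D + F_m E + ([x_v] - [y_v])`, where
the last term is below `F_{m+2}` in absolute value. Every letter multiplies `D - φ E` by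
`ψ = -φ⁻¹` up to an error of at most one, so `|D - φ E| ≤ φ` throughout. With
`φ F_{m+1} + F_m = φ^{m+1}` this forces `|E - c / φ^{m+1}| ≤ 2` on every prefix of an accepted
word: the pairs `(D, E)` that can still lead to acceptance lie in a strip of bounded size for each
suffix length `m`, and once `φ^{m+1} ≥ c`, i.e. for `m` beyond about `2 log₂ c`, in one fixed
bounded strip. Cutting the infinite automaton down to these `O(log c)` states proves the theorem.
-/

/-- The Fibonacci (Zeckendorf) value of a binary word written msd-first:
`[x₁⋯x_ℓ] = Σ_j x_j · F_{ℓ−j+2}`. -/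
def fibVal : List Bool → ℕ
  | [] => 0
  | a :: rest => (if a then Nat.fib (rest.length + 2) else 0) + fibVal rest

/-- A binary word is a valid Fibonacci representation if it has no factor `11`. -/
def ValidFib (w : List Bool) : Prop :=
  w.Chain' (fun a b => a = false ∨ b = false)

open Real goldenRatio

namespace DFA

variable {α σ : Type*}

open Classical in
noncomputable def restrict (M : DFA α σ) (S : Finset σ) : DFA α (Option S) where
  step s a := s.bind fun s => if h : M.step s a ∈ S then some ⟨_, h⟩ else none
  start := if h : M.start ∈ S then some ⟨_, h⟩ else none
  accept := Option.map Subtype.val ⁻¹' (some '' M.accept)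

variable (M : DFA α σ) (S : Finset σ)

open Classical in
theorem map_val_step_restrict (s : Option S) (a : α) :
    ((M.restrict S).step s a).map Subtype.val =
      (s.map Subtype.val).bind fun t => if M.step t a ∈ S then some (M.step t a) else none := by
  cases s <;> simp [restrict, apply_dite (Option.map Subtype.val)]

open Classical in
theorem map_val_eval_restrict (w : List α) :
    ((M.restrict S).eval w).map Subtype.val =
      if ∀ p, p <+: w → M.eval p ∈ S then some (M.eval w) else none := by
  induction w using List.reverseRecOn with
  | nil => simp [restrict, eval_nil, apply_dite (Option.map Subtype.val)]
  | append_singleton w a ih =>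
    rw [eval_append_singleton, map_val_step_restrict, ih, eval_append_singleton]
    simp only [List.prefix_concat_iff, forall_eq_or_imp, eval_append_singleton]
    split_ifs <;> simp_all

theorem mem_accepts_restrict {w : List α} :
    w ∈ (M.restrict S).accepts ↔ (∀ p, p <+: w → M.eval p ∈ S) ∧ w ∈ M.accepts := by
  rw [mem_accepts, mem_accepts]
  change ((M.restrict S).eval w).map Subtype.val ∈ some '' M.accept ↔ _
  rw [map_val_eval_restrict]
  split_ifs with h
  · simp [and_iff_right h]
  · simp [h]

theorem accepts_restrict (h : ∀ w ∈ M.accepts, ∀ p, p <+: w → M.eval p ∈ S) :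
    (M.restrict S).accepts = M.accepts := by
  ext w
  rw [mem_accepts_restrict]
  exact ⟨And.right, fun hw => ⟨h w hw, hw⟩⟩

end DFA

theorem abs_add_sub_goldenRatio_mul_le {D E δ : ℝ} (h : |D - φ * E| ≤ φ) (hδ : |δ| ≤ 1) :
    |D + E + δ - φ * (D + δ)| ≤ φ := by
  have key : D + E + δ - φ * (D + δ) = ψ * (D - φ * E + δ) := by
    linear_combination (D + δ) * one_sub_goldenConj + E * goldenConj_mul_goldenRatio
  calc |D + E + δ - φ * (D + δ)| = φ⁻¹ * |D - φ * E + δ| := by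
        rw [key, abs_mul, abs_of_neg goldenConj_neg, ← inv_goldenRatio]
    _ ≤ φ⁻¹ * (φ + 1) := by gcongr; exact (abs_add_le _ _).trans (add_le_add h hδ)
    _ = φ := by rw [← goldenRatio_sq]; field_simp

theorem fib_succ_le_goldenRatio_pow (n : ℕ) : (Nat.fib (n + 1) : ℝ) ≤ φ ^ n := by
  have hψ : ψ * Nat.fib n ≤ 0 := mul_nonpos_of_nonpos_of_nonneg goldenConj_neg.le (by positivity)
  linarith [fib_succ_sub_goldenConj_mul_fib n]

theorem abs_sub_div_goldenRatio_pow_le {D E c : ℝ} (m : ℕ) (hX : |D - φ * E| ≤ φ)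
    (hr : |Nat.fib (m + 1) * D + Nat.fib m * E - c| ≤ Nat.fib (m + 2)) :
    |E - c / φ ^ (m + 1)| ≤ 2 := by
  have hpos : 0 < φ ^ (m + 1) := by positivity
  have key : φ ^ (m + 1) * (E - c / φ ^ (m + 1)) =
      (Nat.fib (m + 1) * D + Nat.fib m * E - c) - Nat.fib (m + 1) * (D - φ * E) := by
    rw [mul_sub, mul_div_cancel₀ _ hpos.ne', ← goldenRatio_mul_fib_succ_add_fib]
    ring
  have hfib : (Nat.fib (m + 1) : ℝ) * φ ≤ φ ^ (m + 1) := by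
    rw [pow_succ]
    gcongr
    exact fib_succ_le_goldenRatio_pow m
  refine le_of_mul_le_mul_left ?_ hpos
  calc φ ^ (m + 1) * |E - c / φ ^ (m + 1)|
      = |(Nat.fib (m + 1) * D + Nat.fib m * E - c) - Nat.fib (m + 1) * (D - φ * E)| := by
        rw [← key, abs_mul, abs_of_pos hpos]
    _ ≤ Nat.fib (m + 2) + Nat.fib (m + 1) * φ := by
        refine (abs_sub _ _).trans (add_le_add hr ?_)
        rw [abs_mul, Nat.abs_cast]
        gcongr
    _ ≤ φ ^ (m + 1) * 2 := by linarith [fib_succ_le_goldenRatio_pow (m + 1)]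

theorem natCast_lt_goldenRatio_pow (c : ℕ) : (c : ℝ) < φ ^ (2 * Nat.log 2 (c + 1) + 2) := by
  have hlog : c + 1 < 2 ^ (Nat.log 2 (c + 1) + 1) := Nat.lt_pow_succ_log_self (by norm_num) _
  have hφ : (2 : ℝ) ≤ φ ^ 2 := by rw [goldenRatio_sq]; linarith [one_lt_goldenRatio]
  calc (c : ℝ) < 2 ^ (Nat.log 2 (c + 1) + 1) := by exact_mod_cast (Nat.lt_succ_self c).trans hlog
    _ ≤ (φ ^ 2) ^ (Nat.log 2 (c + 1) + 1) := by gcongr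
    _ = φ ^ (2 * Nat.log 2 (c + 1) + 2) := by rw [← pow_mul]; ring_nf

def fibShift : List Bool → ℕ
  | [] => 0
  | a :: rest => (if a then Nat.fib (rest.length + 1) else 0) + fibShift rest

theorem fibVal_append (p v : List Bool) :
    fibVal (p ++ v) =
      Nat.fib (v.length + 1) * fibVal p + Nat.fib v.length * fibShift p + fibVal v := by
  induction p with
  | nil => simp [fibVal, fibShift]
  | cons a p ih =>
    have hfib := Nat.fib_add v.length (p.length + 1)
    cases a
    · simp [fibVal, fibShift, ih]
    · simp only [fibVal, fibShift, List.cons_append, List.length_append, if_true, ih]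
      rw [show p.length + v.length + 2 = v.length + (p.length + 1) + 1 by ring, hfib]
      ring

theorem fibVal_append_singleton (w : List Bool) (b : Bool) :
    fibVal (w ++ [b]) = fibVal w + fibShift w + b.toNat := by
  cases b <;> simp [fibVal_append, fibVal]

theorem fibShift_append_singleton (w : List Bool) (b : Bool) :
    fibShift (w ++ [b]) = fibVal w + b.toNat := by
  induction w with
  | nil => cases b <;> simp [fibShift, fibVal]
  | cons a w ih => cases a <;> simp [fibShift, fibVal, ih]; ring

theorem validFib_iff_isChain (w : List Bool) :
    ValidFib w ↔ w.IsChain (fun a b => a = false ∨ b = false) :=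
  Iff.rfl

theorem fibVal_lt_fib : ∀ {w : List Bool}, ValidFib w → fibVal w < Nat.fib (w.length + 2)
  | [], _ => by simp [fibVal]
  | false :: w, h => by
    have hw : ValidFib w := h.tail
    simpa [fibVal] using (fibVal_lt_fib hw).trans_le (Nat.fib_mono (by omega))
  | [true], _ => by simp [fibVal, Nat.fib_add_two]
  | true :: true :: _, h => by simp [validFib_iff_isChain] at h
  | true :: false :: w, h => by
    have hw : ValidFib w := h.tail.tail
    have hlt := fibVal_lt_fib hw
    have hsum : Nat.fib (w.length + 4) = Nat.fib (w.length + 2) + Nat.fib (w.length + 3) :=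
      Nat.fib_add_two
    show Nat.fib (w.length + 3) + (0 + fibVal w) < Nat.fib (w.length + 4)
    omega

theorem validFib_append_singleton (l : List Bool) (a : Bool) :
    ValidFib (l ++ [a]) ↔ ValidFib l ∧ (l.getLastD false && a) = false := by
  rcases l.eq_nil_or_concat with rfl | ⟨l, b, rfl⟩ <;>
    cases a <;> simp [validFib_iff_isChain, List.isChain_append]
  tauto

section PairWords

variable (w : List (Bool × Bool))

def valDiff : ℤ := fibVal (w.map Prod.fst) - fibVal (w.map Prod.snd)

def shiftDiff : ℤ := fibShift (w.map Prod.fst) - fibShift (w.map Prod.snd)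

def bitDiff (ab : Bool × Bool) : ℤ := ab.1.toNat - ab.2.toNat

theorem abs_bitDiff_le (ab : Bool × Bool) : |bitDiff ab| ≤ 1 := by
  obtain ⟨a, b⟩ := ab
  cases a <;> cases b <;> simp [bitDiff]

theorem valDiff_append_singleton (ab : Bool × Bool) :
    valDiff (w ++ [ab]) = valDiff w + shiftDiff w + bitDiff ab := by
  simp only [valDiff, shiftDiff, bitDiff, List.map_append, List.map_cons, List.map_nil,
    fibVal_append_singleton]
  push_cast
  ring

theorem shiftDiff_append_singleton (ab : Bool × Bool) :
    shiftDiff (w ++ [ab]) = valDiff w + bitDiff ab := by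
  simp only [valDiff, shiftDiff, bitDiff, List.map_append, List.map_cons, List.map_nil,
    fibShift_append_singleton]
  push_cast
  ring

theorem valDiff_append (v : List (Bool × Bool)) :
    valDiff (w ++ v) =
      Nat.fib (v.length + 1) * valDiff w + Nat.fib v.length * shiftDiff w + valDiff v := by
  simp only [valDiff, shiftDiff, List.map_append, fibVal_append, List.length_map]
  push_cast
  ring

theorem abs_valDiff_lt {v : List (Bool × Bool)} (hx : ValidFib (v.map Prod.fst))
    (hy : ValidFib (v.map Prod.snd)) : |valDiff v| < Nat.fib (v.length + 2) := by
  have hx' := fibVal_lt_fib hx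
  have hy' := fibVal_lt_fib hy
  simp only [List.length_map] at hx' hy'
  rw [valDiff, abs_lt]
  constructor <;> omega

theorem abs_valDiff_sub_goldenRatio_mul_shiftDiff_le :
    |(valDiff w : ℝ) - φ * shiftDiff w| ≤ φ := by
  induction w using List.reverseRecOn with
  | nil => simp [valDiff, shiftDiff, fibVal, fibShift, goldenRatio_pos.le]
  | append_singleton w ab ih =>
    rw [valDiff_append_singleton, shiftDiff_append_singleton]
    push_cast
    exact abs_add_sub_goldenRatio_mul_le ih (by exact_mod_cast abs_bitDiff_le ab)

end PairWords

theorem abs_shiftDiff_sub_valDiff_div_le (p : List (Bool × Bool)) {v : List (Bool × Bool)}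
    (hx : ValidFib (v.map Prod.fst)) (hy : ValidFib (v.map Prod.snd)) :
    |(shiftDiff p : ℝ) - valDiff (p ++ v) / φ ^ (v.length + 1)| ≤ 2 := by
  refine abs_sub_div_goldenRatio_pow_le v.length
    (abs_valDiff_sub_goldenRatio_mul_shiftDiff_le p) ?_
  rw [valDiff_append]
  push_cast
  rw [show ∀ a b d : ℝ, a + b - (a + b + d) = -d by intros; ring, abs_neg]
  exact_mod_cast (abs_valDiff_lt hx hy).le

theorem card_Icc_ceil_floor_le {K : Type*} [Field K] [LinearOrder K] [IsStrictOrderedRing K]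
    [FloorRing K] {a b : K} {k : ℕ} (h : b - a ≤ k) : (Finset.Icc ⌈a⌉ ⌊b⌋).card ≤ k + 1 := by
  have hk : ((⌊b⌋ - ⌈a⌉ : ℤ) : K) ≤ k := by
    push_cast
    linarith [Int.floor_le b, Int.le_ceil a]
  have : ⌊b⌋ - ⌈a⌉ ≤ k := by exact_mod_cast hk
  rw [Int.card_Icc]
  omega

noncomputable def strip (t r : ℝ) : Finset (ℤ × ℤ) :=
  (Finset.Icc ⌈t - r⌉ ⌊t + r⌋).biUnion fun E => Finset.Icc ⌈φ * (E - 1)⌉ ⌊φ * (E + 1)⌋ ×ˢ {E}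

theorem mem_strip {t r : ℝ} {D E : ℤ} :
    (D, E) ∈ strip t r ↔ |(E : ℝ) - t| ≤ r ∧ |(D : ℝ) - φ * E| ≤ φ := by
  simp only [strip, Finset.mem_biUnion, Finset.mem_product, Finset.mem_Icc, Finset.mem_singleton,
    Int.ceil_le, Int.le_floor, abs_le]
  constructor
  · rintro ⟨E, ⟨h₁, h₂⟩, ⟨h₃, h₄⟩, rfl⟩
    refine ⟨⟨?_, ?_⟩, ?_, ?_⟩ <;> linarith
  · rintro ⟨⟨h₁, h₂⟩, h₃, h₄⟩
    refine ⟨E, ⟨?_, ?_⟩, ⟨?_, ?_⟩, rfl⟩ <;> linarith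

theorem card_strip (t : ℝ) {r : ℝ} {k : ℕ} (hr : 2 * r ≤ k) : (strip t r).card ≤ (k + 1) * 5 := by
  refine (Finset.card_biUnion_le_card_mul _ _ 5 fun E _ => ?_).trans
    (Nat.mul_le_mul_right _ (card_Icc_ceil_floor_le (by linarith)))
  rw [Finset.card_product, Finset.card_singleton, mul_one]
  exact card_Icc_ceil_floor_le (by push_cast; linarith [goldenRatio_lt_two])

/-- The strip with index `m` holds the states from which an accepting run has `m` letters left;
for longer remainders `c / φ ^ (m + 1) ≤ 1`, and those states all lie in the first strip. -/
noncomputable def liveSet (c : ℕ) : Finset (ℤ × ℤ) :=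
  strip (1 / 2) (5 / 2) ∪
    (Finset.range (2 * Nat.log 2 (c + 1) + 1)).biUnion fun m => strip (c / φ ^ (m + 1)) 2

theorem card_liveSet (c : ℕ) : (liveSet c).card ≤ 55 * (Nat.log 2 (c + 1) + 1) := by
  have hfar : (strip (1 / 2) (5 / 2)).card ≤ (5 + 1) * 5 := card_strip _ (by norm_num)
  have hnear := Finset.card_biUnion_le_card_mul (Finset.range (2 * Nat.log 2 (c + 1) + 1))
    (fun m => strip (c / φ ^ (m + 1)) 2) ((4 + 1) * 5) fun m _ => card_strip _ (by norm_num)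
  rw [Finset.card_range] at hnear
  have := Finset.card_union_le (strip (1 / 2) (5 / 2))
    ((Finset.range (2 * Nat.log 2 (c + 1) + 1)).biUnion fun m => strip (c / φ ^ (m + 1)) 2)
  rw [liveSet]
  omega

theorem mem_liveSet {c : ℕ} {D E : ℤ} (m : ℕ) (hX : |(D : ℝ) - φ * E| ≤ φ)
    (hE : |(E : ℝ) - c / φ ^ (m + 1)| ≤ 2) : (D, E) ∈ liveSet c := by
  rcases lt_or_ge m (2 * Nat.log 2 (c + 1) + 1) with hm | hm
  · exact Finset.mem_union_right _
      (Finset.mem_biUnion.2 ⟨m, Finset.mem_range.2 hm, mem_strip.2 ⟨hE, hX⟩⟩)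
  · have hpos : 0 < φ ^ (m + 1) := by positivity
    have hc : (c : ℝ) ≤ φ ^ (m + 1) := (natCast_lt_goldenRatio_pow c).le.trans
      (pow_le_pow_right₀ one_lt_goldenRatio.le (by omega))
    have h₀ : 0 ≤ (c : ℝ) / φ ^ (m + 1) := by positivity
    have h₁ : (c : ℝ) / φ ^ (m + 1) ≤ 1 := (div_le_one hpos).2 hc
    refine Finset.mem_union_left _ (mem_strip.2 ⟨?_, hX⟩)
    rw [abs_le] at hE ⊢
    constructor <;> linarith

/-- The state after reading `w` records `valDiff w`, `shiftDiff w` and the last letter of `w`;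
`none` is the sink entered once either component contains a factor `11`. -/
def diffDFA (c : ℤ) : DFA (Bool × Bool) (Option ((ℤ × ℤ) × (Bool × Bool))) where
  step s ab := s.bind fun ((D, E), (a, b)) =>
    if a && ab.1 || b && ab.2 then none else some ((D + E + bitDiff ab, D + bitDiff ab), ab)
  start := some ((0, 0), (false, false))
  accept := {s | ∃ E ab, s = some ((c, E), ab)}

open Classical in
theorem eval_diffDFA (c : ℤ) (w : List (Bool × Bool)) :
    (diffDFA c).eval w =
      if ValidFib (w.map Prod.fst) ∧ ValidFib (w.map Prod.snd) then
        some ((valDiff w, shiftDiff w),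
          ((w.map Prod.fst).getLastD false, (w.map Prod.snd).getLastD false))
      else none := by
  induction w using List.reverseRecOn with
  | nil => simp [diffDFA, DFA.eval_nil, valDiff, shiftDiff, fibVal, fibShift, validFib_iff_isChain]
  | append_singleton w ab ih =>
    rw [DFA.eval_append_singleton, ih]
    simp only [List.map_append, List.map_cons, List.map_nil, validFib_append_singleton,
      List.getLastD_concat, valDiff_append_singleton, shiftDiff_append_singleton]
    split_ifs <;> simp_all [diffDFA]

theorem mem_accepts_diffDFA {c : ℤ} {w : List (Bool × Bool)} :
    w ∈ (diffDFA c).accepts ↔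
      ValidFib (w.map Prod.fst) ∧ ValidFib (w.map Prod.snd) ∧ valDiff w = c := by
  rw [DFA.mem_accepts, eval_diffDFA]
  split_ifs with h
  · simp only [diffDFA, Set.mem_ofPred_eq, Option.some.injEq, Prod.mk.injEq, h, true_and]
    exact ⟨fun ⟨_, _, ⟨hc, _⟩, _⟩ => hc, fun hc => ⟨_, _, ⟨hc, rfl⟩, rfl⟩⟩
  · simp only [diffDFA, Set.mem_ofPred_eq, reduceCtorEq, exists_false, false_iff]
    tauto

noncomputable def liveStates (c : ℕ) : Finset (Option ((ℤ × ℤ) × (Bool × Bool))) :=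
  (liveSet c ×ˢ Finset.univ).map Function.Embedding.some

theorem eval_mem_liveStates {c : ℕ} {w p : List (Bool × Bool)} (hw : w ∈ (diffDFA c).accepts)
    (hp : p <+: w) : (diffDFA c).eval p ∈ liveStates c := by
  obtain ⟨v, rfl⟩ := hp
  obtain ⟨hx, hy, hc⟩ := mem_accepts_diffDFA.1 hw
  rw [List.map_append] at hx hy
  have hE := abs_shiftDiff_sub_valDiff_div_le p hx.right_of_append hy.right_of_append
  rw [hc, Int.cast_natCast] at hE
  rw [eval_diffDFA, if_pos ⟨hx.left_of_append, hy.left_of_append⟩]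
  exact Finset.mem_map_of_mem _ (Finset.mem_product.2
    ⟨mem_liveSet v.length (abs_valDiff_sub_goldenRatio_mul_shiftDiff_le p) hE, Finset.mem_univ _⟩)

theorem subtraction_const_state_complexity :
    ∃ C : ℕ, ∀ c : ℕ, ∃ (σ : Type) (_ : Fintype σ) (M : DFA (Bool × Bool) σ),
      Fintype.card σ ≤ C * (Nat.log 2 (c + 1) + 1) ∧
      ∀ w : List (Bool × Bool),
        w ∈ M.accepts ↔
          ValidFib (w.map Prod.fst) ∧ ValidFib (w.map Prod.snd) ∧
            fibVal (w.map Prod.fst) = fibVal (w.map Prod.snd) + c := by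
  refine ⟨221, fun c => ⟨_, inferInstance, (diffDFA c).restrict (liveStates c), ?_, fun w => ?_⟩⟩
  · have hcard : (liveStates c).card = (liveSet c).card * 4 := by simp [liveStates]
    rw [Fintype.card_option, Fintype.card_coe, hcard]
    linarith [card_liveSet c]
  · rw [DFA.accepts_restrict _ _ fun _ hw _ hp => eval_mem_liveStates hw hp, mem_accepts_diffDFA,
      valDiff]
    exact and_congr_right fun _ => and_congr_right fun _ => by omega
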